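/- Let α be a nonempty finite type and let μ be a probability distribution on α × Bool × Bool with coordinate random variables A, X, Y. Assume (i) P(A=a) > 0 for every a ∈ α, (ii) A and Y are conditionally independent given X, (iii) X and Y are not independent, and (iv) the binary form of assumption (A3) holds: P(Y=0|X=0) > P(Y=1|X=0) and P(Y=1|X=1) > P(Y=0|X=1). Then (P(Y=1) − min_a P(Y=1|A=a)) / (1 − min_a P(Y=1|A=a)) ≤ P(X=1) ≤ P(Y=1) / (max_a P(Y=1|A=a)), and max_a P(Y=1|A=a) > 0 and min_a P(Y=1|A=a) < 1. (Corollary 2: refinement under assumption (A3).) -/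

import Mathlib

open Classical in
noncomputable def pr {Ω : Type*} [Fintype Ω] (μ : Ω → ℝ) (E : Ω → Prop) : ℝ :=
  ∑ ω, if E ω then μ ω else 0

noncomputable def cpr {Ω : Type*} [Fintype Ω] (μ : Ω → ℝ) (E F : Ω → Prop) : ℝ :=
  pr μ (fun ω => E ω ∧ F ω) / pr μ F

/-! Writing `q x = P(Y=1 | X=x)`, conditional independence makes every `P(Y=1 | A=a)` a convex
combination of `q 0` and `q 1`, and `P(Y=1)` a convex combination of the `P(Y=1 | A=a)`, so
`q 0 ≤ min_a ≤ P(Y=1) ≤ max_a ≤ q 1`; assumption (A3) gives `q 0 < 1/2 < q 1`. Both bounds on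
`P(X=1)` then follow from `P(Y=1) = P(X=0) q 0 + P(X=1) q 1`. -/

section WeightedAverage

variable {ι : Type*} [Fintype ι] {w f : ι → ℝ} {c : ℝ}

lemma sum_mul_le_of_le (hw : ∀ i, 0 ≤ w i) (hw₁ : ∑ i, w i = 1) (hf : ∀ i, f i ≤ c) :
    ∑ i, w i * f i ≤ c :=
  calc ∑ i, w i * f i ≤ ∑ i, w i * c :=
        Finset.sum_le_sum fun i _ => mul_le_mul_of_nonneg_left (hf i) (hw i)
    _ = c := by rw [← Finset.sum_mul, hw₁, one_mul]

lemma le_sum_mul_of_le (hw : ∀ i, 0 ≤ w i) (hw₁ : ∑ i, w i = 1) (hf : ∀ i, c ≤ f i) :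
    c ≤ ∑ i, w i * f i :=
  calc c = ∑ i, w i * c := by rw [← Finset.sum_mul, hw₁, one_mul]
    _ ≤ ∑ i, w i * f i :=
        Finset.sum_le_sum fun i _ => mul_le_mul_of_nonneg_left (hf i) (hw i)

end WeightedAverage

section FiniteProbability

variable {Ω β : Type*} [Fintype Ω] [Fintype β] {μ : Ω → ℝ} {E F : Ω → Prop}

lemma pr_nonneg (hμ : ∀ ω, 0 ≤ μ ω) (E : Ω → Prop) : 0 ≤ pr μ E :=
  Finset.sum_nonneg fun ω _ => by split_ifs <;> simp [hμ ω]

lemma pr_mono (hμ : ∀ ω, 0 ≤ μ ω) (h : ∀ ω, E ω → F ω) : pr μ E ≤ pr μ F :=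
  Finset.sum_le_sum fun ω _ => by
    by_cases hE : E ω
    · simp [hE, h ω hE]
    · split_ifs <;> simp [hμ ω]

lemma pr_and_comm : pr μ (fun ω => E ω ∧ F ω) = pr μ (fun ω => F ω ∧ E ω) := by
  simp only [and_comm]

lemma sum_pr_and_eq (f : Ω → β) (E : Ω → Prop) :
    ∑ b, pr μ (fun ω => E ω ∧ f ω = b) = pr μ E := by
  classical
  unfold pr
  rw [Finset.sum_comm]
  refine Finset.sum_congr rfl fun ω _ => ?_
  by_cases hE : E ω <;> simp [hE]

lemma sum_pr_eq_one (hμ₁ : ∑ ω, μ ω = 1) (f : Ω → β) : ∑ b, pr μ (fun ω => f ω = b) = 1 := by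
  have h := sum_pr_and_eq (μ := μ) f fun _ => True
  simp only [true_and] at h
  rw [h]
  simp [pr, hμ₁]

lemma cpr_nonneg (hμ : ∀ ω, 0 ≤ μ ω) (E F : Ω → Prop) : 0 ≤ cpr μ E F :=
  div_nonneg (pr_nonneg hμ _) (pr_nonneg hμ _)

lemma cpr_le_one (hμ : ∀ ω, 0 ≤ μ ω) (E F : Ω → Prop) : cpr μ E F ≤ 1 :=
  div_le_one_of_le₀ (pr_mono hμ fun _ h => h.2) (pr_nonneg hμ _)

lemma pr_pos_of_cpr_lt (hμ : ∀ ω, 0 ≤ μ ω) {E' : Ω → Prop} (h : cpr μ E F < cpr μ E' F) :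
    0 < pr μ F := by
  refine (pr_nonneg hμ F).lt_of_ne fun h0 => ?_
  simp [cpr, ← h0] at h

lemma cpr_mul_pr (hμ : ∀ ω, 0 ≤ μ ω) (E F : Ω → Prop) :
    cpr μ E F * pr μ F = pr μ (fun ω => E ω ∧ F ω) := by
  rcases (pr_nonneg hμ F).eq_or_lt with h0 | hpos
  · rw [← h0, mul_zero]
    exact (le_antisymm ((pr_mono hμ fun _ h => h.2).trans h0.ge) (pr_nonneg hμ _)).symm
  · exact div_mul_cancel₀ _ hpos.ne'

lemma sum_cpr_eq_one (hF : pr μ F ≠ 0) (f : Ω → β) : ∑ b, cpr μ (fun ω => f ω = b) F = 1 := by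
  simp only [cpr, ← Finset.sum_div, pr_and_comm (E := fun ω => f ω = _), sum_pr_and_eq]
  exact div_self hF

lemma pr_eq_sum_pr_mul_cpr (hμ : ∀ ω, 0 ≤ μ ω) (f : Ω → β) (E : Ω → Prop) :
    pr μ E = ∑ b, pr μ (fun ω => f ω = b) * cpr μ E (fun ω => f ω = b) := by
  simp only [mul_comm (pr μ _), cpr_mul_pr hμ, sum_pr_and_eq]

lemma cpr_eq_sum_cpr_mul_cpr (hμ : ∀ ω, 0 ≤ μ ω) (f : Ω → β)
    (hCI : ∀ b, 0 < pr μ (fun ω => f ω = b) →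
      cpr μ (fun ω => F ω ∧ E ω) (fun ω => f ω = b) =
        cpr μ F (fun ω => f ω = b) * cpr μ E (fun ω => f ω = b)) :
    cpr μ E F = ∑ b, cpr μ (fun ω => f ω = b) F * cpr μ E (fun ω => f ω = b) := by
  have hslice : ∀ b, pr μ (fun ω => (E ω ∧ F ω) ∧ f ω = b) =
      pr μ (fun ω => F ω ∧ f ω = b) * cpr μ E (fun ω => f ω = b) := by
    intro b
    rcases (pr_nonneg hμ fun ω => f ω = b).eq_or_lt with h0 | hpos
    · have hle : ∀ G : Ω → Prop, pr μ (fun ω => G ω ∧ f ω = b) = 0 := fun G =>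
        le_antisymm ((pr_mono hμ fun _ h => h.2).trans h0.ge) (pr_nonneg hμ _)
      rw [hle, hle, zero_mul]
    · rw [← cpr_mul_pr hμ F, mul_right_comm, ← hCI b hpos, cpr_mul_pr hμ]
      simp only [and_comm]
  rw [cpr, ← sum_pr_and_eq f]
  simp only [hslice, Finset.sum_div, cpr, pr_and_comm (E := fun ω => f ω = _)]
  exact Finset.sum_congr rfl fun b _ => by ring

end FiniteProbability

lemma mixing_weight_bounds {p₀ p₁ q₀ q₁ m M y : ℝ} (hp₀ : 0 < p₀) (hp₁ : 0 < p₁)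
    (hp : p₀ + p₁ = 1) (hq₀ : 0 ≤ q₀) (hq₁ : q₁ ≤ 1) (hq : q₀ < q₁) (hy : y = p₀ * q₀ + p₁ * q₁)
    (hm : q₀ ≤ m) (hM : M ≤ q₁) (hmy : m ≤ y) (hyM : y ≤ M) :
    (y - m) / (1 - m) ≤ p₁ ∧ p₁ ≤ y / M ∧ 0 < M ∧ m < 1 := by
  have hy₀ : 0 < y := by nlinarith
  have hy₁ : y < 1 := by nlinarith
  have hM₀ : 0 < M := hy₀.trans_le hyM
  have hm₁ : m < 1 := hmy.trans_lt hy₁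
  refine ⟨?_, ?_, hM₀, hm₁⟩
  · rw [div_le_iff₀ (sub_pos.2 hm₁)]
    nlinarith
  · rw [le_div_iff₀ hM₀]
    nlinarith

theorem stmt3_general {α : Type*} [Fintype α] [Nonempty α]
    (μ : α × Bool × Bool → ℝ)
    (hnn : ∀ ω, 0 ≤ μ ω) (hsum : ∑ ω, μ ω = 1)
    (hA : ∀ a : α, 0 < pr μ (fun ω => ω.1 = a))
    (hCI : ∀ (a : α) (y x : Bool), 0 < pr μ (fun ω => ω.2.1 = x) →
      cpr μ (fun ω => ω.1 = a ∧ ω.2.2 = y) (fun ω => ω.2.1 = x) =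
        cpr μ (fun ω => ω.1 = a) (fun ω => ω.2.1 = x) *
          cpr μ (fun ω => ω.2.2 = y) (fun ω => ω.2.1 = x))
    (hA3₀ : cpr μ (fun ω => ω.2.2 = true) (fun ω => ω.2.1 = false) <
            cpr μ (fun ω => ω.2.2 = false) (fun ω => ω.2.1 = false))
    (hA3₁ : cpr μ (fun ω => ω.2.2 = false) (fun ω => ω.2.1 = true) <
            cpr μ (fun ω => ω.2.2 = true) (fun ω => ω.2.1 = true)) :
    (pr μ (fun ω => ω.2.2 = true) -
        Finset.univ.inf' Finset.univ_nonempty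
          (fun a : α => cpr μ (fun ω => ω.2.2 = true) (fun ω => ω.1 = a))) /
      (1 - Finset.univ.inf' Finset.univ_nonempty
          (fun a : α => cpr μ (fun ω => ω.2.2 = true) (fun ω => ω.1 = a))) ≤
      pr μ (fun ω => ω.2.1 = true) ∧
    pr μ (fun ω => ω.2.1 = true) ≤
      pr μ (fun ω => ω.2.2 = true) /
        Finset.univ.sup' Finset.univ_nonempty
          (fun a : α => cpr μ (fun ω => ω.2.2 = true) (fun ω => ω.1 = a)) ∧
    0 < Finset.univ.sup' Finset.univ_nonempty
          (fun a : α => cpr μ (fun ω => ω.2.2 = true) (fun ω => ω.1 = a)) ∧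
    Finset.univ.inf' Finset.univ_nonempty
          (fun a : α => cpr μ (fun ω => ω.2.2 = true) (fun ω => ω.1 = a)) < 1 := by
  set q : Bool → ℝ := fun x => cpr μ (fun ω => ω.2.2 = true) (fun ω => ω.2.1 = x)
  set r : α → ℝ := fun a => cpr μ (fun ω => ω.2.2 = true) (fun ω => ω.1 = a)
  have hq : q false < q true := by
    have h₀ := sum_cpr_eq_one (pr_pos_of_cpr_lt hnn hA3₀).ne' fun ω : α × Bool × Bool => ω.2.2
    have h₁ := sum_cpr_eq_one (pr_pos_of_cpr_lt hnn hA3₁).ne' fun ω : α × Bool × Bool => ω.2.2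
    simp only [Fintype.sum_bool] at h₀ h₁
    linarith
  have hr : ∀ a, r a = ∑ x, cpr μ (fun ω => ω.2.1 = x) (fun ω => ω.1 = a) * q x :=
    fun a => cpr_eq_sum_cpr_mul_cpr hnn _ fun x => hCI a true x
  have hr_weights : ∀ a, ∑ x, cpr μ (fun ω => ω.2.1 = x) (fun ω => ω.1 = a) = 1 :=
    fun a => sum_cpr_eq_one (hA a).ne' _
  have hq_le_r : ∀ a, q false ≤ r a := fun a => hr a ▸
    le_sum_mul_of_le (fun _ => cpr_nonneg hnn _ _) (hr_weights a)
      (Bool.forall_bool.2 ⟨le_rfl, hq.le⟩)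
  have hr_le_q : ∀ a, r a ≤ q true := fun a => hr a ▸
    sum_mul_le_of_le (fun _ => cpr_nonneg hnn _ _) (hr_weights a)
      (Bool.forall_bool.2 ⟨hq.le, le_rfl⟩)
  have hY : pr μ (fun ω => ω.2.2 = true) = ∑ a, pr μ (fun ω => ω.1 = a) * r a :=
    pr_eq_sum_pr_mul_cpr hnn _ _
  have hYX := pr_eq_sum_pr_mul_cpr hnn (fun ω => ω.2.1) (fun ω => ω.2.2 = true)
  have hX := sum_pr_eq_one hsum fun ω : α × Bool × Bool => ω.2.1
  simp only [Fintype.sum_bool] at hYX hX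
  exact mixing_weight_bounds (pr_pos_of_cpr_lt hnn hA3₀) (pr_pos_of_cpr_lt hnn hA3₁)
    (by linarith) (cpr_nonneg hnn _ _) (cpr_le_one hnn _ _) hq (by linarith)
    (Finset.le_inf' _ _ fun a _ => hq_le_r a) (Finset.sup'_le _ _ fun a _ => hr_le_q a)
    (hY ▸ le_sum_mul_of_le (fun a => (hA a).le) (sum_pr_eq_one hsum _)
      fun a => Finset.inf'_le r (Finset.mem_univ a))
    (hY ▸ sum_mul_le_of_le (fun a => (hA a).le) (sum_pr_eq_one hsum _)
      fun a => Finset.le_sup' r (Finset.mem_univ a))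

/-- Corollary 2: refinement under assumption (A3). -/
theorem stmt3 {α : Type*} [Fintype α] [Nonempty α]
    (μ : α × Bool × Bool → ℝ)
    (hnn : ∀ ω, 0 ≤ μ ω) (hsum : ∑ ω, μ ω = 1)
    (hA : ∀ a : α, 0 < pr μ (fun ω => ω.1 = a))
    (hCI : ∀ (a : α) (y x : Bool), 0 < pr μ (fun ω => ω.2.1 = x) →
      cpr μ (fun ω => ω.1 = a ∧ ω.2.2 = y) (fun ω => ω.2.1 = x) =
        cpr μ (fun ω => ω.1 = a) (fun ω => ω.2.1 = x) *
          cpr μ (fun ω => ω.2.2 = y) (fun ω => ω.2.1 = x))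
    (hdep : ¬ ∀ x y : Bool,
      pr μ (fun ω => ω.2.1 = x ∧ ω.2.2 = y) =
        pr μ (fun ω => ω.2.1 = x) * pr μ (fun ω => ω.2.2 = y))
    (hA3₀ : cpr μ (fun ω => ω.2.2 = true) (fun ω => ω.2.1 = false) <
            cpr μ (fun ω => ω.2.2 = false) (fun ω => ω.2.1 = false))
    (hA3₁ : cpr μ (fun ω => ω.2.2 = false) (fun ω => ω.2.1 = true) <
            cpr μ (fun ω => ω.2.2 = true) (fun ω => ω.2.1 = true)) :
    (pr μ (fun ω => ω.2.2 = true) -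
        Finset.univ.inf' Finset.univ_nonempty
          (fun a : α => cpr μ (fun ω => ω.2.2 = true) (fun ω => ω.1 = a))) /
      (1 - Finset.univ.inf' Finset.univ_nonempty
          (fun a : α => cpr μ (fun ω => ω.2.2 = true) (fun ω => ω.1 = a))) ≤
      pr μ (fun ω => ω.2.1 = true) ∧
    pr μ (fun ω => ω.2.1 = true) ≤
      pr μ (fun ω => ω.2.2 = true) /
        Finset.univ.sup' Finset.univ_nonempty
          (fun a : α => cpr μ (fun ω => ω.2.2 = true) (fun ω => ω.1 = a)) ∧
    0 < Finset.univ.sup' Finset.univ_nonempty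
          (fun a : α => cpr μ (fun ω => ω.2.2 = true) (fun ω => ω.1 = a)) ∧
    Finset.univ.inf' Finset.univ_nonempty
          (fun a : α => cpr μ (fun ω => ω.2.2 = true) (fun ω => ω.1 = a)) < 1 :=
  stmt3_general μ hnn hsum hA hCI hA3₀ hA3₁
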